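/- arXiv:1602.07764 — 2 statements merged into one kernel-verified Lean document; each statement's English description precedes it below -/
import Mathlib

section
/- Let V ∈ R^{(Y·R)×X} with entries V_{(n,m),i} = f_π(l|eₙ) f_O(eₙ|i) f_R(eₘ|i,l) / P(a=l|x=i), where P(a=l|x=i) = Σₙ f_π(l|eₙ) f_O(eₙ|i) > 0 and Σₘ f_R(eₘ|i,l) = 1. Define ρ(i,l) = Σₘ Σₙ V_{(n,m),i} / f_π(l|eₙ). Then ρ(i,l) = 1 / P(a=l|x=i), and consequently f_O(eₙ|i) = Σₘ V_{(n,m),i} / (f_π(l|eₙ) ρ(i,l)). -/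
/-! Dividing `V_{(n,m)}` by the policy weight `f_π(l|eₙ)` leaves the product `f_O(eₙ) f_R(eₘ) / P`,
whose double sum is `1 / P` because both factors are distributions; dividing by `ρ = 1 / P` instead
removes `P` as well, and summing out `f_R` recovers `f_O`. -/

theorem Finset.sum_sum_mul_div_of_sum_eq_one {ι κ K : Type*} [Fintype ι] [Fintype κ] [Field K]
    {p : ι → K} {q : κ → K} (hp : ∑ i, p i = 1) (hq : ∑ j, q j = 1) (P : K) :
    ∑ j, ∑ i, p i * q j / P = 1 / P := by
  simp_rw [← Finset.sum_div, ← Finset.sum_mul, hp, one_mul, hq]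

theorem observation_recovery_general {Y R : ℕ}
    (fπ : Fin Y → ℝ) (fO : Fin Y → ℝ) (fR : Fin R → ℝ)
    (hfπ : ∀ n, 0 < fπ n)
    (hfOsum : ∑ n, fO n = 1)
    (hfRsum : ∑ m, fR m = 1)
    (Pal : ℝ) (hPalpos : 0 < Pal)
    (V : Fin Y × Fin R → ℝ)
    (hV : ∀ n m, V (n, m) = fπ n * fO n * fR m / Pal)
    (ρ : ℝ) (hρ : ρ = ∑ m, ∑ n, V (n, m) / fπ n) :
    ρ = 1 / Pal ∧ ∀ n, fO n = ∑ m, V (n, m) / (fπ n * ρ) := by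
  have hV_div : ∀ n m, V (n, m) / fπ n = fO n * fR m / Pal := fun n m => by
    rw [hV]
    field_simp [(hfπ n).ne']
  have hρ_eq : ρ = 1 / Pal := by
    simp_rw [hρ, hV_div]
    exact Finset.sum_sum_mul_div_of_sum_eq_one hfOsum hfRsum Pal
  refine ⟨hρ_eq, fun n => ?_⟩
  have hV_div_ρ : ∀ m, V (n, m) / (fπ n * ρ) = fO n * fR m := fun m => by
    rw [← div_div, hV_div, hρ_eq]
    field_simp [hPalpos.ne']
  rw [Finset.sum_congr rfl fun m _ => hV_div_ρ m, ← Finset.mul_sum, hfRsum, mul_one]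

/-- Observation recovery (Lemma 1): with
`V_{(n,m),i} = f_π(l|eₙ) f_O(eₙ|i) f_R(eₘ|i,l) / P(a=l|x=i)` and
`ρ(i,l) = Σₘ Σₙ V_{(n,m),i} / f_π(l|eₙ)`, one has `ρ(i,l) = 1/P(a=l|x=i)` and
`f_O(eₙ|i) = Σₘ V_{(n,m),i} / (f_π(l|eₙ) ρ(i,l))`. -/
theorem observation_recovery {Y R : ℕ}
    (fπ : Fin Y → ℝ) (fO : Fin Y → ℝ) (fR : Fin R → ℝ)
    (hfπ : ∀ n, 0 < fπ n)
    (hfO : ∀ n, 0 ≤ fO n) (hfOsum : ∑ n, fO n = 1)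
    (hfRsum : ∑ m, fR m = 1)
    (Pal : ℝ) (hPal : Pal = ∑ n, fπ n * fO n) (hPalpos : 0 < Pal)
    (V : Fin Y × Fin R → ℝ)
    (hV : ∀ n m, V (n, m) = fπ n * fO n * fR m / Pal)
    (ρ : ℝ) (hρ : ρ = ∑ m, ∑ n, V (n, m) / fπ n) :
    ρ = 1 / Pal ∧ ∀ n, fO n = ∑ m, V (n, m) / (fπ n * ρ) :=
  observation_recovery_general fπ fO fR hfπ hfOsum hfRsum Pal hPalpos V hV ρ hρ
end

section
/- Consider a POMDP with state-action value function Q_{π,M} satisfying the Poisson equation Q(x,a) = r̄(x,a) − η + Σ_{x'} f_T(x'|x,a) Σ_{a'} f_π(a'|x') Q(x',a'). Suppose for every pair of state-action pairs (x,a), (x',a') there exists a policy reaching (x',a') from (x,a) in expected time at most D, rewards lie in [0, r_max], and π is optimal (maximizes average reward η). Then max_{x,a} Q(x,a) − min_{x,a} Q(x,a) ≤ r_max · D. -/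
/-!
Fix the target pair `(x, a)` and a policy `π` whose hitting time `τ` of `(x, a)` is at most `D`.
For every `ε > 0` the function `Q + (η + ε) τ` is strictly superharmonic for the chain of `π`
away from `(x, a)`: one step of the Bellman equation loses the reward `r ≥ 0` and the margin `ε`,
and following `π` instead of the greedy action can only lower `Q`. By the minimum principle it
is smallest at `(x, a)`, where `τ = 0`; letting `ε → 0` gives `Q x a - Q x' a' ≤ η τ x' a'`.
Finally `η ≤ r_max`, read off the Bellman equation at a maximiser of `Q`.
-/

open Finset Filter Topology

section WeightedAverage

variable {ι : Type*} [Fintype ι] {w f : ι → ℝ} {c : ℝ}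

theorem sum_mul_le_of_forall_le (hw0 : ∀ i, 0 ≤ w i) (hw1 : ∑ i, w i = 1)
    (hf : ∀ i, f i ≤ c) : ∑ i, w i * f i ≤ c :=
  calc ∑ i, w i * f i
      ≤ ∑ i, w i * c := sum_le_sum fun i _ => mul_le_mul_of_nonneg_left (hf i) (hw0 i)
    _ = c := by rw [← sum_mul, hw1, one_mul]

theorem le_sum_mul_of_forall_le (hw0 : ∀ i, 0 ≤ w i) (hw1 : ∑ i, w i = 1)
    (hf : ∀ i, c ≤ f i) : c ≤ ∑ i, w i * f i :=
  calc c = ∑ i, w i * c := by rw [← sum_mul, hw1, one_mul]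
    _ ≤ ∑ i, w i * f i := sum_le_sum fun i _ => mul_le_mul_of_nonneg_left (hf i) (hw0 i)

end WeightedAverage

theorem le_apply_of_sum_mul_lt_of_ne {ι : Type*} [Fintype ι] {K : ι → ι → ℝ}
    (hK0 : ∀ i j, 0 ≤ K i j) (hK1 : ∀ i, ∑ j, K i j = 1) {g : ι → ℝ} {t : ι}
    (hg : ∀ i, i ≠ t → ∑ j, K i j * g j < g i) (i : ι) : g t ≤ g i := by
  obtain ⟨p, -, hp⟩ := exists_min_image univ g ⟨i, mem_univ i⟩
  by_cases hpt : p = t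
  · exact hpt ▸ hp i (mem_univ i)
  · exact absurd (hg p hpt)
      (not_lt.2 (le_sum_mul_of_forall_le (hK0 p) (hK1 p) fun j => hp j (mem_univ j)))

theorem le_of_forall_pos_le_add_mul {a b t : ℝ} (h : ∀ ε > 0, a ≤ b + ε * t) : a ≤ b := by
  have hlim : Tendsto (fun ε => b + ε * t) (𝓝[>] 0) (𝓝 b) := by
    simpa using ((Continuous.tendsto (f := fun ε : ℝ => b + ε * t) (by fun_prop) 0).mono_left
      nhdsWithin_le_nhds)
  exact ge_of_tendsto hlim (eventually_nhdsWithin_of_forall h)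

section StepKernel

variable {S A : Type*}

def stepKernel (P : S → A → S → ℝ) (π : S → A → ℝ) (p q : S × A) : ℝ :=
  P p.1 p.2 q.1 * π q.1 q.2

variable {P : S → A → S → ℝ} {π : S → A → ℝ}

theorem stepKernel_nonneg (hP0 : ∀ x a x', 0 ≤ P x a x') (hπ0 : ∀ x a, 0 ≤ π x a)
    (p q : S × A) : 0 ≤ stepKernel P π p q :=
  mul_nonneg (hP0 _ _ _) (hπ0 _ _)

variable [Fintype S] [Fintype A]

theorem sum_stepKernel_mul (g : S × A → ℝ) (p : S × A) :
    ∑ q, stepKernel P π p q * g q = ∑ x', P p.1 p.2 x' * ∑ a', π x' a' * g (x', a') := by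
  simp only [stepKernel, Fintype.sum_prod_type, mul_sum, mul_assoc]

theorem sum_stepKernel (hP1 : ∀ x a, ∑ x', P x a x' = 1) (hπ1 : ∀ x, ∑ a, π x a = 1)
    (p : S × A) : ∑ q, stepKernel P π p q = 1 := by
  simpa [hπ1, hP1] using sum_stepKernel_mul (P := P) (π := π) (fun _ => 1) p

end StepKernel

section Bellman

variable {S A : Type*} [Fintype S] [Fintype A] [Nonempty A]
  {P : S → A → S → ℝ} {r : S → A → ℝ} {η : ℝ} {Q : S → A → ℝ}

theorem gain_le_of_bellman [Nonempty S] (hP0 : ∀ x a x', 0 ≤ P x a x')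
    (hP1 : ∀ x a, ∑ x', P x a x' = 1)
    (hQ : ∀ x a, Q x a = r x a - η + ∑ x', P x a x' * univ.sup' univ_nonempty (Q x'))
    {rmax : ℝ} (hr : ∀ x a, r x a ≤ rmax) : η ≤ rmax := by
  obtain ⟨p, -, hp⟩ := exists_max_image univ (fun q : S × A => Q q.1 q.2) univ_nonempty
  have hV : ∑ x', P p.1 p.2 x' * univ.sup' univ_nonempty (Q x') ≤ Q p.1 p.2 :=
    sum_mul_le_of_forall_le (hP0 _ _) (hP1 _ _) fun x' =>
      sup'_le _ _ fun a' _ => hp (x', a') (mem_univ _)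
  linarith [hQ p.1 p.2, hr p.1 p.2]

variable {π τ : S → A → ℝ} {x : S} {a : A}

theorem sub_le_mul_hittingTime (hP0 : ∀ x a x', 0 ≤ P x a x')
    (hP1 : ∀ x a, ∑ x', P x a x' = 1) (hπ0 : ∀ x a, 0 ≤ π x a) (hπ1 : ∀ x, ∑ a, π x a = 1)
    (hτx : τ x a = 0)
    (hτ : ∀ x' a', (x', a') ≠ (x, a) → τ x' a' = 1 + ∑ y, P x' a' y * ∑ b, π y b * τ y b)
    (hQ : ∀ x a, Q x a = r x a - η + ∑ x', P x a x' * univ.sup' univ_nonempty (Q x'))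
    (hr : ∀ x a, 0 ≤ r x a) (x' : S) (a' : A) : Q x a - Q x' a' ≤ η * τ x' a' := by
  refine le_of_forall_pos_le_add_mul (t := τ x' a') fun ε hε => ?_
  set g : S × A → ℝ := fun q => Q q.1 q.2 + (η + ε) * τ q.1 q.2
  have hQπ : ∀ p : S × A, ∑ q, stepKernel P π p q * Q q.1 q.2
      ≤ ∑ y, P p.1 p.2 y * univ.sup' univ_nonempty (Q y) := fun p => by
    rw [sum_stepKernel_mul (fun q => Q q.1 q.2)]
    exact sum_le_sum fun y _ => mul_le_mul_of_nonneg_left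
      (sum_mul_le_of_forall_le (hπ0 y) (hπ1 y) fun b => le_sup' (Q y) (mem_univ b)) (hP0 _ _ _)
  have hsuper : ∀ p, p ≠ (x, a) → ∑ q, stepKernel P π p q * g q < g p := fun p hp => by
    have hgsum : ∑ q, stepKernel P π p q * g q = ∑ q, stepKernel P π p q * Q q.1 q.2
        + (η + ε) * ∑ q, stepKernel P π p q * τ q.1 q.2 := by
      simp only [g, mul_add, sum_add_distrib, mul_sum, mul_left_comm]
    rw [hgsum, sum_stepKernel_mul (fun q => τ q.1 q.2)]
    simp only [g, hτ p.1 p.2 hp, mul_one_add]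
    linarith [hQπ p, hQ p.1 p.2, hr p.1 p.2]
  have := le_apply_of_sum_mul_lt_of_ne (stepKernel_nonneg hP0 hπ0) (sum_stepKernel hP1 hπ1)
    hsuper (x', a')
  simp only [g, hτx, mul_zero, add_zero] at this
  linarith

end Bellman

/-- Range of the optimal bias function: if every state-action pair can reach every other
state-action pair with expected passage time at most `D` (encoded through a bounded
solution of the hitting-time Bellman equation), rewards lie in `[0, r_max]`, and `Q`
satisfies the average-reward Bellman optimality (Poisson) equation, then the range of `Q`
is at most `r_max · D`. -/
theorem optimal_bias_range {S A : Type*} [Fintype S] [Fintype A] [Nonempty S] [Nonempty A]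
    (P : S → A → S → ℝ)
    (hP0 : ∀ x a x', 0 ≤ P x a x') (hP1 : ∀ x a, ∑ x', P x a x' = 1)
    (r : S → A → ℝ) (rmax : ℝ)
    (hr : ∀ x a, 0 ≤ r x a ∧ r x a ≤ rmax)
    (D : ℝ)
    (hD : ∀ xtgt : S, ∀ atgt : A, ∃ (π : S → A → ℝ) (τ : S → A → ℝ),
      (∀ x a, 0 ≤ π x a) ∧ (∀ x, ∑ a, π x a = 1) ∧
      τ xtgt atgt = 0 ∧ (∀ x a, 0 ≤ τ x a ∧ τ x a ≤ D) ∧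
      (∀ x a, (x, a) ≠ (xtgt, atgt) →
        τ x a = 1 + ∑ x', P x a x' * ∑ a', π x' a' * τ x' a'))
    (η : ℝ) (Q : S → A → ℝ)
    (hQ : ∀ x a, Q x a =
      r x a - η + ∑ x', P x a x' * Finset.univ.sup' Finset.univ_nonempty (Q x')) :
    ∀ x a x' a', Q x a - Q x' a' ≤ rmax * D := by
  intro x a x' a'
  obtain ⟨π, τ, hπ0, hπ1, hτx, hτD, hτ⟩ := hD x a
  have hrmax : 0 ≤ rmax := (hr x a).1.trans (hr x a).2
  calc Q x a - Q x' a'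
      ≤ η * τ x' a' :=
        sub_le_mul_hittingTime hP0 hP1 hπ0 hπ1 hτx hτ hQ (fun x a => (hr x a).1) x' a'
    _ ≤ rmax * τ x' a' :=
        mul_le_mul_of_nonneg_right (gain_le_of_bellman hP0 hP1 hQ fun x a => (hr x a).2)
          (hτD x' a').1
    _ ≤ rmax * D := mul_le_mul_of_nonneg_left (hτD x' a').2 hrmax
end
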